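/- Let $(X_n)$, $(Y_n)$ be sequences of real random variables and $R > 0$, and suppose $a_n(X_n - x_0) \to N(0, \sigma_X^2)$ in distribution and $b_n(Y_n - y_0) \to N(0, \sigma_Y^2)$ in distribution with $X_n, Y_n$ independent for each $n$, $x_0, y_0 > 0$, $a_n, b_n \to \infty$, and $b_n/a_n \to 0$. Then $b_n\left(\frac{X_n}{Y_n} - \frac{x_0}{y_0}\right) \to N\left(0, \frac{x_0^2}{y_0^2}\cdot\frac{\sigma_Y^2}{y_0^2}\right)$ in distribution. -/

import Mathlib

/-!
After scaling by the slower rate `bₙ`, the numerator error `bₙ(Xₙ - x₀) = (bₙ/aₙ)·aₙ(Xₙ - x₀)` is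
a sequence converging in distribution times a null sequence, hence tends to `0` in probability;
so do `Yₙ - y₀ = bₙ⁻¹·bₙ(Yₙ - y₀)` and `bₙ(Yₙ - y₀)² = bₙ⁻¹·(bₙ(Yₙ - y₀))²`. By the identity
  `bₙ(Xₙ/Yₙ - x₀/y₀) + (x₀/y₀²)·bₙ(Yₙ - y₀) = (bₙ(Xₙ - x₀) + (x₀/y₀²)·bₙ(Yₙ - y₀)²) / Yₙ`,
valid where `Yₙ ≠ 0`, the scaled ratio is the linear term `-(x₀/y₀²)·bₙ(Yₙ - y₀)` plus a term
negligible in probability, so by Slutsky's theorem it inherits the Gaussian limit of that term.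
-/

open MeasureTheory ProbabilityTheory Filter

/-- Convergence in distribution of a sequence of real random variables to a limit law,
phrased via integrals of bounded continuous test functions. -/
def ConvInDist {Ω : Type*} [MeasurableSpace Ω] (μ : Measure Ω) (X : ℕ → Ω → ℝ)
    (ν : Measure ℝ) : Prop :=
  ∀ f : BoundedContinuousFunction ℝ ℝ,
    Tendsto (fun n => ∫ ω, f (X n ω) ∂μ) atTop (nhds (∫ x, f x ∂ν))

open scoped Topology

namespace MeasureTheory

variable {ι Ω Ω' E : Type*} {mΩ : MeasurableSpace Ω} {mΩ' : MeasurableSpace Ω'}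
  {μ : Measure Ω} {μ' : Measure Ω'} {l : Filter ι}

lemma tendstoInMeasure_const_of_tendsto [PseudoMetricSpace E] {r : ι → E} {c : E}
    (hr : Tendsto r l (𝓝 c)) : TendstoInMeasure μ (fun i _ ↦ r i) l (fun _ ↦ c) := by
  rw [tendstoInMeasure_iff_dist]
  intro ε hε
  refine tendsto_const_nhds.congr' ?_
  filter_upwards [Metric.tendsto_nhds.1 hr ε hε] with i hi
  simp [not_le.2 hi]

lemma TendstoInMeasure.add [SeminormedAddCommGroup E] {f g : ι → Ω → E} {F G : Ω → E}
    (hf : TendstoInMeasure μ f l F) (hg : TendstoInMeasure μ g l G) :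
    TendstoInMeasure μ (f + g) l (F + G) := by
  rw [tendstoInMeasure_iff_norm] at hf hg ⊢
  intro ε hε
  have hsub (i : ι) : {ω | ε ≤ ‖(f + g) i ω - (F + G) ω‖}
      ⊆ {ω | ε / 2 ≤ ‖f i ω - F ω‖} ∪ {ω | ε / 2 ≤ ‖g i ω - G ω‖} := by
    intro ω hω
    by_contra h
    simp only [Set.mem_union, Set.mem_ofPred_eq, not_or, not_le] at h hω
    have := norm_add_le (f i ω - F ω) (g i ω - G ω)
    rw [show f i ω - F ω + (g i ω - G ω) = (f + g) i ω - (F + G) ω by simp; abel] at this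
    linarith
  refine tendsto_of_tendsto_of_tendsto_of_le_of_le tendsto_const_nhds
    (by simpa using (hf _ (half_pos hε)).add (hg _ (half_pos hε))) (fun _ ↦ zero_le)
    fun i ↦ (measure_mono (hsub i)).trans (measure_union_le _ _)

lemma tendstoInMeasure_zero_of_eq_div {F G D : ι → Ω → ℝ} {c : ℝ} (hc : c ≠ 0)
    (hF : TendstoInMeasure μ F l 0) (hG : TendstoInMeasure μ G l (fun _ ↦ c))
    (hD : ∀ i ω, G i ω ≠ 0 → D i ω = F i ω / G i ω) :
    TendstoInMeasure μ D l 0 := by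
  rw [tendstoInMeasure_iff_norm] at hF hG ⊢
  intro ε hε
  have hc' : 0 < |c| / 2 := by positivity
  have hsub (i : ι) : {ω | ε ≤ ‖D i ω - 0‖}
      ⊆ {ω | |c| / 2 ≤ ‖G i ω - c‖} ∪ {ω | ε * (|c| / 2) ≤ ‖F i ω - 0‖} := by
    intro ω hω
    by_contra h
    simp only [Set.mem_union, Set.mem_ofPred_eq, not_or, not_le, Real.norm_eq_abs,
      sub_zero] at h hω
    have hGc : |c| / 2 < |G i ω| := by
      have := abs_sub_abs_le_abs_sub c (G i ω)
      rw [abs_sub_comm] at this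
      linarith
    have hG0 : G i ω ≠ 0 := by
      intro h0; rw [h0, abs_zero] at hGc; linarith
    rw [hD i ω hG0, abs_div, le_div_iff₀ (by positivity)] at hω
    nlinarith
  refine tendsto_of_tendsto_of_tendsto_of_le_of_le tendsto_const_nhds
    (by simpa using (hG _ hc').add (hF _ (mul_pos hε hc'))) (fun _ ↦ zero_le)
    fun i ↦ (measure_mono (hsub i)).trans (measure_union_le _ _)

variable [IsProbabilityMeasure μ] [IsProbabilityMeasure μ']

lemma TendstoInDistribution.tendstoInMeasure_const [PseudoEMetricSpace E] [MeasurableSpace E]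
    [OpensMeasurableSpace E] {X : ι → Ω → E} {c : E}
    (h : TendstoInDistribution X l (fun _ ↦ c) (fun _ ↦ μ) μ') :
    TendstoInMeasure μ X l (fun _ ↦ c) := by
  intro ε hε
  have hclosed : IsClosed {x : E | ε ≤ edist x c} :=
    isClosed_le continuous_const (continuous_id.edist continuous_const)
  have hlimsup := ProbabilityMeasure.limsup_measure_closed_le_of_tendsto h.tendsto hclosed
  simp only [ProbabilityMeasure.coe_mk, Measure.map_const, measure_univ, one_smul,
    Measure.dirac_apply' _ hclosed.measurableSet] at hlimsup
  rw [Set.indicator_of_notMem (by simpa using hε.ne')] at hlimsup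
  simp only [Measure.map_apply_of_aemeasurable (h.forall_aemeasurable _) hclosed.measurableSet,
    Set.preimage_ofPred_eq] at hlimsup
  exact tendsto_of_le_liminf_of_limsup_le zero_le hlimsup

lemma TendstoInDistribution.tendstoInMeasure_of_sub_eq_smul [NormedAddCommGroup E]
    [NormedSpace ℝ E] [MeasurableSpace E] [BorelSpace E] [SecondCountableTopology E]
    [l.IsCountablyGenerated] {S T : ι → Ω → E} {Z : Ω' → E} {r : ι → ℝ} {c : E}
    (hT : TendstoInDistribution T l Z (fun _ ↦ μ) μ') (hr : Tendsto r l (𝓝 0))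
    (hS : ∀ᶠ i in l, ∀ ω, S i ω - c = r i • T i ω) :
    TendstoInMeasure μ S l (fun _ ↦ c) := by
  have hrT := hT.continuous_comp_prodMk_of_tendstoInMeasure_const
    (g := fun p : E × ℝ ↦ p.2 • p.1) (by fun_prop) (tendstoInMeasure_const_of_tendsto hr)
    (fun _ ↦ aemeasurable_const)
  simp only [zero_smul] at hrT
  have hrT' := tendstoInMeasure_iff_norm.1 hrT.tendstoInMeasure_const
  refine tendstoInMeasure_iff_norm.2 fun ε hε ↦ (hrT' ε hε).congr' ?_
  filter_upwards [hS] with i hi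
  simp [hi]

end MeasureTheory

lemma convInDist_map_iff_tendstoInDistribution {Ω Ω' : Type*} [MeasurableSpace Ω]
    [MeasurableSpace Ω'] {μ : Measure Ω} {μ' : Measure Ω'} [IsProbabilityMeasure μ]
    [IsProbabilityMeasure μ'] {X : ℕ → Ω → ℝ} {Z : Ω' → ℝ} (hX : ∀ n, AEMeasurable (X n) μ)
    (hZ : AEMeasurable Z μ') :
    ConvInDist μ X (μ'.map Z) ↔ TendstoInDistribution X atTop Z (fun _ ↦ μ) μ' := by
  refine ⟨fun h ↦ ⟨hX, hZ, ProbabilityMeasure.tendsto_iff_forall_integral_tendsto.2 fun f ↦ ?_⟩,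
    fun h f ↦ ?_⟩
  · simpa only [ProbabilityMeasure.coe_mk,
      integral_map (hX _) f.continuous.aestronglyMeasurable,
      integral_map hZ f.continuous.aestronglyMeasurable] using h f
  · simpa only [ProbabilityMeasure.coe_mk,
      integral_map (hX _) f.continuous.aestronglyMeasurable,
      integral_map hZ f.continuous.aestronglyMeasurable] using
      ProbabilityMeasure.tendsto_iff_forall_integral_tendsto.1 h.tendsto f

lemma gaussianReal_zero_map_const_mul {v : NNReal} {c κ : ℝ} (hκ : c ^ 2 = κ) :
    (gaussianReal 0 v).map (fun x ↦ c * x) = gaussianReal 0 (Real.toNNReal κ * v) := by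
  rw [gaussianReal_map_const_mul, mul_zero]
  congr 2
  ext
  simp [← hκ, sq_nonneg]

theorem ratio_clt_slower_rate_general {Ω : Type*} [MeasurableSpace Ω] (μ : Measure Ω)
    [IsProbabilityMeasure μ] (X Y : ℕ → Ω → ℝ) (a b : ℕ → ℝ) (x0 y0 : ℝ)
    (vX vY : NNReal)
    (hmeasX : ∀ n, Measurable (X n)) (hmeasY : ∀ n, Measurable (Y n))
    (hy0 : 0 < y0)
    (ha : Tendsto a atTop atTop) (hb : Tendsto b atTop atTop)
    (hba : Tendsto (fun n => b n / a n) atTop (nhds 0))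
    (hXconv : ConvInDist μ (fun n ω => a n * (X n ω - x0)) (gaussianReal 0 vX))
    (hYconv : ConvInDist μ (fun n ω => b n * (Y n ω - y0)) (gaussianReal 0 vY)) :
    ConvInDist μ (fun n ω => b n * (X n ω / Y n ω - x0 / y0))
      (gaussianReal 0 ((Real.toNNReal (x0 ^ 2 / y0 ^ 4)) * vY)) := by
  set V : ℕ → Ω → ℝ := fun n ω ↦ b n * (Y n ω - y0)
  have hA := (convInDist_map_iff_tendstoInDistribution (by fun_prop) aemeasurable_id).1
    (by rwa [Measure.map_id] : ConvInDist μ (fun n ω ↦ a n * (X n ω - x0)) _)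
  have hV := (convInDist_map_iff_tendstoInDistribution (by fun_prop) aemeasurable_id).1
    (by rwa [Measure.map_id] : ConvInDist μ V _)
  have hb_inv : Tendsto (fun n ↦ (b n)⁻¹) atTop (𝓝 0) := tendsto_inv_atTop_zero.comp hb
  have hb_ne : ∀ᶠ n in atTop, b n ≠ 0 := (hb.eventually_gt_atTop 0).mono fun _ h ↦ h.ne'
  have ha_ne : ∀ᶠ n in atTop, a n ≠ 0 := (ha.eventually_gt_atTop 0).mono fun _ h ↦ h.ne'
  have hY : TendstoInMeasure μ Y atTop (fun _ ↦ y0) :=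
    hV.tendstoInMeasure_of_sub_eq_smul hb_inv <| by
      filter_upwards [hb_ne] with n hn ω
      simp [V, hn]
  have hU : TendstoInMeasure μ (fun n ω ↦ b n * (X n ω - x0)) atTop 0 :=
    hA.tendstoInMeasure_of_sub_eq_smul (c := 0) hba <| by
      filter_upwards [ha_ne] with n hn ω
      simp only [sub_zero, smul_eq_mul]
      field_simp
  have hVY : TendstoInMeasure μ (fun n ω ↦ x0 / y0 ^ 2 * (V n ω * (Y n ω - y0))) atTop 0 :=
    (hV.continuous_comp (continuous_pow 2)).tendstoInMeasure_of_sub_eq_smul (c := 0)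
      (by simpa using hb_inv.const_mul (x0 / y0 ^ 2)) <| by
      filter_upwards [hb_ne] with n hn ω
      simp only [sub_zero, smul_eq_mul, Function.comp_apply, V]
      field_simp
  have hdiff : TendstoInMeasure μ
      ((fun n ω ↦ b n * (X n ω / Y n ω - x0 / y0)) - fun n ω ↦ -(x0 / y0 ^ 2) * V n ω) atTop 0 :=
    tendstoInMeasure_zero_of_eq_div hy0.ne' (by simpa only [add_zero] using hU.add hVY) hY
      fun n ω hYn ↦ by
        simp only [Pi.sub_apply, Pi.add_apply, V]
        field_simp
        ring
  rw [← gaussianReal_zero_map_const_mul (c := -(x0 / y0 ^ 2)) (by field_simp),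
    convInDist_map_iff_tendstoInDistribution (by fun_prop) (by fun_prop)]
  exact tendstoInDistribution_of_tendstoInMeasure_sub _ _
    (hV.continuous_comp (continuous_const_mul _)) hdiff (by fun_prop)

/-- Delta-method/Slutsky with asymmetric rates: if `aₙ(Xₙ - x₀) ⇒ N(0, σ_X²)`,
`bₙ(Yₙ - y₀) ⇒ N(0, σ_Y²)`, `Xₙ ⫫ Yₙ`, `x₀, y₀ > 0`, `aₙ, bₙ → ∞` and `bₙ/aₙ → 0`,
then `bₙ(Xₙ/Yₙ - x₀/y₀) ⇒ N(0, (x₀²/y₀²)(σ_Y²/y₀²))`. -/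
theorem ratio_clt_slower_rate {Ω : Type*} [MeasurableSpace Ω] (μ : Measure Ω)
    [IsProbabilityMeasure μ] (X Y : ℕ → Ω → ℝ) (a b : ℕ → ℝ) (x0 y0 : ℝ)
    (vX vY : NNReal)
    (hmeasX : ∀ n, Measurable (X n)) (hmeasY : ∀ n, Measurable (Y n))
    (hx0 : 0 < x0) (hy0 : 0 < y0)
    (ha : Tendsto a atTop atTop) (hb : Tendsto b atTop atTop)
    (hba : Tendsto (fun n => b n / a n) atTop (nhds 0))
    (hindep : ∀ n, IndepFun (X n) (Y n) μ)
    (hXconv : ConvInDist μ (fun n ω => a n * (X n ω - x0)) (gaussianReal 0 vX))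
    (hYconv : ConvInDist μ (fun n ω => b n * (Y n ω - y0)) (gaussianReal 0 vY)) :
    ConvInDist μ (fun n ω => b n * (X n ω / Y n ω - x0 / y0))
      (gaussianReal 0 ((Real.toNNReal (x0 ^ 2 / y0 ^ 4)) * vY)) :=
  ratio_clt_slower_rate_general μ X Y a b x0 y0 vX vY hmeasX hmeasY hy0 ha hb hba hXconv hYconv
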